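/- arXiv:1703.03603 — 2 statements merged into one kernel-verified Lean document; each statement's English description precedes it below -/
import Mathlib

section
/- Let f be a convex size function and let S* be an optimal solution to f-DS. Then f(2)/2 ≥ f(|S*|)/|S*|². In particular, if f grows super-quadratically in the sense that f(x)/x² is unbounded, then optimal solutions to f-DS have bounded size. -/
/-! Averaging over pairs: the weight of `S` is the sum of the weights of its `C(s, 2)`
two-element subsets, so some pair `P ⊆ S` has `w(P) ≥ w(S) / C(s, 2)`. Optimality of `S`
against `P` gives `w(S) / C(s, 2) / f 2 ≤ w(P) / f 2 ≤ w(S) / f s`, and since `w(S) > 0` this is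
`f s ≤ C(s, 2) f 2 ≤ s² f 2 / 2`. The bound on optimal sizes follows once `f x / x²` exceeds
`f 2 / 2`. -/

structure WGraph (V : Type) [Fintype V] [DecidableEq V] where
  E : Finset (Sym2 V)
  not_diag : ∀ e ∈ E, ¬ e.IsDiag
  w : Sym2 V → ℝ
  w_pos : ∀ e ∈ E, 0 < w e

variable {V : Type} [Fintype V] [DecidableEq V]

def WGraph.wS (G : WGraph V) (S : Finset V) : ℝ :=
  ∑ e ∈ G.E.filter (fun e => e ∈ S.sym2), G.w e

def WGraph.deg (G : WGraph V) (S : Finset V) (v : V) : ℝ :=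
  ∑ u ∈ S.filter (fun u => s(u, v) ∈ G.E), G.w s(u, v)

def WGraph.IsOpt {V : Type} [Fintype V] [DecidableEq V]
    (G : WGraph V) (f : ℕ → ℝ) (S : Finset V) : Prop :=
  S.Nonempty ∧ ∀ T : Finset V, T.Nonempty → G.wS T / f T.card ≤ G.wS S / f S.card

theorem Sym2.mem_sym2_iff_toFinset_subset {α : Type*} [DecidableEq α] {e : Sym2 α}
    {s : Finset α} : e ∈ s.sym2 ↔ e.toFinset ⊆ s := by
  simp only [Finset.mem_sym2_iff, Finset.subset_iff, Sym2.mem_toFinset]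

theorem Sym2.mem_sym2_iff_eq_toFinset {α : Type*} [DecidableEq α] {e : Sym2 α}
    (he : ¬e.IsDiag) {P : Finset α} (hP : P.card = 2) : e ∈ P.sym2 ↔ P = e.toFinset := by
  rw [Sym2.mem_sym2_iff_toFinset_subset]
  refine ⟨fun h => (Finset.eq_of_subset_of_card_le h ?_).symm, fun h => h ▸ subset_rfl⟩
  rw [hP, Sym2.card_toFinset_of_not_isDiag e he]

theorem Finset.filter_powersetCard_two_mem_sym2 {α : Type*} [DecidableEq α] {e : Sym2 α}
    (he : ¬e.IsDiag) (s : Finset α) :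
    {P ∈ s.powersetCard 2 | e ∈ P.sym2} = if e ∈ s.sym2 then {e.toFinset} else ∅ := by
  ext P
  simp only [Finset.mem_filter, Finset.mem_powersetCard]
  split_ifs with hs
  · rw [Finset.mem_singleton]
    refine ⟨fun ⟨⟨_, hP⟩, heP⟩ => (Sym2.mem_sym2_iff_eq_toFinset he hP).1 heP, ?_⟩
    rintro rfl
    exact ⟨⟨Sym2.mem_sym2_iff_toFinset_subset.1 hs, Sym2.card_toFinset_of_not_isDiag e he⟩,
      Sym2.mem_sym2_iff_toFinset_subset.2 subset_rfl⟩
  · simp only [Finset.notMem_empty, iff_false, not_and]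
    rintro ⟨hPs, hP⟩ heP
    exact hs (Sym2.mem_sym2_iff_toFinset_subset.2 <|
      ((Sym2.mem_sym2_iff_eq_toFinset he hP).1 heP) ▸ hPs)

/-- Every off-diagonal pair inside `s` lies in exactly one two-element subset of `s`. -/
theorem Finset.sum_powersetCard_two_sum_filter_mem_sym2 {α β : Type*} [DecidableEq α]
    [AddCommMonoid β] (E : Finset (Sym2 α)) (hE : ∀ e ∈ E, ¬e.IsDiag) (w : Sym2 α → β)
    (s : Finset α) :
    ∑ P ∈ s.powersetCard 2, ∑ e ∈ E with e ∈ P.sym2, w e = ∑ e ∈ E with e ∈ s.sym2, w e := by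
  simp only [Finset.sum_filter]
  rw [Finset.sum_comm]
  refine Finset.sum_congr rfl fun e he => ?_
  rw [← Finset.sum_filter, Finset.filter_powersetCard_two_mem_sym2 (hE e he)]
  split_ifs <;> simp

namespace WGraph

variable (G : WGraph V)

theorem sum_wS_powersetCard_two (S : Finset V) :
    ∑ P ∈ S.powersetCard 2, G.wS P = G.wS S :=
  Finset.sum_powersetCard_two_sum_filter_mem_sym2 G.E G.not_diag G.w S

theorem wS_pos_of_mem {e : Sym2 V} (he : e ∈ G.E) {S : Finset V} (heS : e ∈ S.sym2) :
    0 < G.wS S :=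
  Finset.sum_pos' (fun x hx => (G.w_pos x (Finset.mem_filter.1 hx).1).le)
    ⟨e, Finset.mem_filter.2 ⟨he, heS⟩, G.w_pos e he⟩

theorem exists_wS_le_choose_mul (S : Finset V) (hS : 0 < G.wS S) :
    ∃ P ∈ S.powersetCard 2, G.wS S ≤ S.card.choose 2 * G.wS P := by
  have hne : (S.powersetCard 2).Nonempty := by
    rw [Finset.nonempty_iff_ne_empty]
    rintro h
    rw [← G.sum_wS_powersetCard_two, h, Finset.sum_empty] at hS
    exact hS.false
  obtain ⟨P, hP, hmax⟩ := (S.powersetCard 2).exists_max_image G.wS hne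
  refine ⟨P, hP, ?_⟩
  have := Finset.sum_le_card_nsmul _ G.wS _ hmax
  rwa [G.sum_wS_powersetCard_two, Finset.card_powersetCard, nsmul_eq_mul] at this

variable {G} {f : ℕ → ℝ}

theorem IsOpt.wS_pos (hfpos : ∀ x, 1 ≤ x → 0 < f x) (hE : G.E.Nonempty) {S : Finset V}
    (hopt : G.IsOpt f S) : 0 < G.wS S := by
  obtain ⟨e, he⟩ := hE
  have hTne : e.toFinset.Nonempty := ⟨_, Sym2.mem_toFinset.2 (Sym2.out_fst_mem e)⟩
  have hT : 0 < G.wS e.toFinset / f e.toFinset.card :=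
    div_pos (G.wS_pos_of_mem he (Sym2.mem_sym2_iff_toFinset_subset.2 subset_rfl))
      (hfpos _ (Finset.card_pos.2 hTne))
  exact (div_pos_iff_of_pos_right (hfpos _ (Finset.card_pos.2 hopt.1))).1
    (hT.trans_le (hopt.2 _ hTne))
theorem IsOpt.le_choose_two_mul (hfpos : ∀ x, 1 ≤ x → 0 < f x) (hE : G.E.Nonempty)
    {S : Finset V} (hopt : G.IsOpt f S) : f S.card ≤ S.card.choose 2 * f 2 := by
  have hS := hopt.wS_pos hfpos hE
  obtain ⟨P, hP, hSP⟩ := G.exists_wS_le_choose_mul S hS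
  have hP2 : P.card = 2 := (Finset.mem_powersetCard.1 hP).2
  have hfS : 0 < f S.card := hfpos _ (Finset.card_pos.2 hopt.1)
  have hPS := hopt.2 P (Finset.card_pos.1 (by omega))
  rw [hP2, div_le_div_iff₀ (hfpos 2 one_le_two) hfS] at hPS
  refine le_of_mul_le_mul_left ?_ hS
  calc G.wS S * f S.card ≤ S.card.choose 2 * G.wS P * f S.card := by gcongr
    _ = S.card.choose 2 * (G.wS P * f S.card) := by ring
    _ ≤ S.card.choose 2 * (G.wS S * f 2) := by gcongr
    _ = G.wS S * (S.card.choose 2 * f 2) := by ring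

theorem IsOpt.div_card_sq_le (hfpos : ∀ x, 1 ≤ x → 0 < f x) (hE : G.E.Nonempty)
    {S : Finset V} (hopt : G.IsOpt f S) : f S.card / (S.card : ℝ) ^ 2 ≤ f 2 / 2 := by
  have hs : (S.card : ℝ) ≠ 0 := Nat.cast_ne_zero.2 (Finset.card_pos.2 hopt.1).ne'
  have hchoose : (S.card.choose 2 : ℝ) ≤ (S.card : ℝ) ^ 2 / 2 := by
    simpa using Nat.choose_le_pow_div (α := ℝ) 2 S.card
  calc f S.card / (S.card : ℝ) ^ 2 ≤ S.card.choose 2 * f 2 / (S.card : ℝ) ^ 2 := by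
        gcongr; exact hopt.le_choose_two_mul hfpos hE
    _ ≤ (S.card : ℝ) ^ 2 / 2 * f 2 / (S.card : ℝ) ^ 2 := by
        gcongr; exact (hfpos 2 one_le_two).le
    _ = f 2 / 2 := by field_simp

end WGraph

theorem stmt4_general (f : ℕ → ℝ) (hfpos : ∀ x, 1 ≤ x → 0 < f x)
    (G : WGraph V) (hE : G.E.Nonempty)
    (Sstar : Finset V) (hopt : G.IsOpt f Sstar) :
    f Sstar.card / (Sstar.card : ℝ) ^ 2 ≤ f 2 / 2 ∧
    (Filter.Tendsto (fun x : ℕ => f x / (x : ℝ) ^ 2) Filter.atTop Filter.atTop →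
      ∃ B : ℕ, ∀ (m : ℕ) (G' : WGraph (Fin m)), G'.E.Nonempty →
        ∀ S : Finset (Fin m), G'.IsOpt f S → S.card ≤ B) := by
  refine ⟨hopt.div_card_sq_le hfpos hE, fun htend => ?_⟩
  obtain ⟨B, hB⟩ := Filter.eventually_atTop.1 (htend.eventually_gt_atTop (f 2 / 2))
  exact ⟨B, fun m G' hE' S hS =>
    le_of_not_gt fun hlt => (hB _ hlt.le).not_ge (hS.div_card_sq_le hfpos hE')⟩

theorem stmt4 (f : ℕ → ℝ) (hmono : Monotone f) (hf0 : f 0 = 0) (hfpos : ∀ x, 1 ≤ x → 0 < f x)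
    (hconv : ∀ x : ℕ, 0 ≤ f x - 2 * f (x + 1) + f (x + 2))
    (G : WGraph V) (hE : G.E.Nonempty)
    (Sstar : Finset V) (hopt : G.IsOpt f Sstar) :
    f Sstar.card / (Sstar.card : ℝ) ^ 2 ≤ f 2 / 2 ∧
    (Filter.Tendsto (fun x : ℕ => f x / (x : ℝ) ^ 2) Filter.atTop Filter.atTop →
      ∃ B : ℕ, ∀ (m : ℕ) (G' : WGraph (Fin m)), G'.E.Nonempty →
        ∀ S : Finset (Fin m), G'.IsOpt f S → S.card ≤ B) :=
  stmt4_general f hfpos G hE Sstar hopt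
end

section
/- Let f be a convex size function, let S* be an optimal solution to f-DS, and let S_n, S_{n−1}, …, S_1 be the subsets produced by the greedy peeling on G. Then (f(|S*|) − f(|S*|−1)) · w(S*)/f(|S*|) ≤ (2·f(n)/n) · max_{1≤i≤n} w(S_i)/f(i). Equivalently, the greedy peeling returns a subset S with w(S*)/f(|S*|) ≤ ( (2f(n)/n) / (f(|S*|)−f(|S*|−1)) ) · w(S)/f(|S|). -/
variable {V : Type} [Fintype V] [DecidableEq V]

/-!
Let `θ` be the optimal `f`-density, attained by `S*` with `|S*| = k`. Removing any vertex `v`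
from `S*` cannot raise the density, so `deg_{S*}(v) ≥ θ (f k - f (k-1))`. Let `S_j` be the
first set of the peeling from which a vertex `v` of `S*` is removed (or `S_1 = S*`). Then
`S* ⊆ S_j` and `v` has minimum degree in `S_j`, whence
`deg_{S*}(v) ≤ deg_{S_j}(v) ≤ 2 w(S_j) / j`. Finally, convexity with `f 0 = 0` makes `f i / i`
non-decreasing, so
`2 w(S_j) / j = 2 (w(S_j) / f j) (f j / j) ≤ 2 (f n / n) max_i w(S_i) / f i`.
-/

lemma Finset.mem_sym2_erase_iff {α : Type*} [DecidableEq α] {S : Finset α} {v : α}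
    {e : Sym2 α} :
    e ∈ (S.erase v).sym2 ↔ e ∈ S.sym2 ∧ v ∉ e := by
  induction e using Sym2.ind with
  | _ a b =>
    simp only [Finset.mk_mem_sym2_iff, Finset.mem_erase, Sym2.mem_iff, not_or]
    constructor
    · rintro ⟨⟨hav, ha⟩, hbv, hb⟩
      exact ⟨⟨ha, hb⟩, Ne.symm hav, Ne.symm hbv⟩
    · rintro ⟨⟨ha, hb⟩, hva, hvb⟩
      exact ⟨⟨Ne.symm hva, ha⟩, Ne.symm hvb, hb⟩

namespace WGraph

variable (G : WGraph V)

lemma wS_nonneg (S : Finset V) : 0 ≤ G.wS S :=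
  Finset.sum_nonneg fun _ he => (G.w_pos _ (Finset.mem_filter.mp he).1).le

lemma deg_mono {S T : Finset V} (h : S ⊆ T) (v : V) : G.deg S v ≤ G.deg T v :=
  Finset.sum_le_sum_of_subset_of_nonneg (Finset.filter_subset_filter _ h)
    fun _ hu _ => (G.w_pos _ (Finset.mem_filter.mp hu).2).le

lemma sum_edges_mem_eq_deg {S : Finset V} {v : V} (hv : v ∈ S) :
    ∑ e ∈ (G.E.filter (· ∈ S.sym2)).filter (v ∈ ·), G.w e = G.deg S v := by
  have himage : (G.E.filter (· ∈ S.sym2)).filter (v ∈ ·) =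
      (S.filter fun u => s(u, v) ∈ G.E).image fun u => s(u, v) := by
    ext e
    simp only [Finset.mem_filter, Finset.mem_image]
    constructor
    · rintro ⟨⟨he, heS⟩, hve⟩
      obtain ⟨u, rfl⟩ := Sym2.mem_iff_exists.mp hve
      rw [Sym2.eq_swap] at he heS
      exact ⟨u, ⟨(Finset.mk_mem_sym2_iff.mp heS).1, he⟩, Sym2.eq_swap⟩
    · rintro ⟨u, ⟨hu, he⟩, rfl⟩
      exact ⟨⟨he, Finset.mk_mem_sym2_iff.mpr ⟨hu, hv⟩⟩, Sym2.mem_mk_right u v⟩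
  rw [himage, Finset.sum_image fun a _ b _ h => Sym2.congr_left.mp h, deg]

lemma wS_eq_wS_erase_add_deg {S : Finset V} {v : V} (hv : v ∈ S) :
    G.wS S = G.wS (S.erase v) + G.deg S v := by
  rw [wS, ← Finset.sum_filter_not_add_sum_filter _ (v ∈ ·), G.sum_edges_mem_eq_deg hv,
    Finset.filter_filter, wS]
  simp only [Finset.mem_sym2_erase_iff]

lemma deg_insert {S : Finset V} {a : V} (ha : a ∉ S) (v : V) :
    G.deg (insert a S) v = G.deg S v + if s(a, v) ∈ G.E then G.w s(a, v) else 0 := by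
  rw [deg, deg, Finset.filter_insert]
  split
  · rw [Finset.sum_insert fun h => ha (Finset.mem_filter.mp h).1, add_comm]
  · rw [add_zero]

lemma not_mem_diag (a : V) : s(a, a) ∉ G.E := fun h => G.not_diag _ h (Sym2.mk_isDiag_iff.mpr rfl)

lemma sum_deg_eq_two_mul_wS (S : Finset V) : ∑ v ∈ S, G.deg S v = 2 * G.wS S := by
  induction S using Finset.induction_on with
  | empty => simp [wS]
  | @insert a S ha ih =>
    have hdeg : ∑ v ∈ S, (if s(a, v) ∈ G.E then G.w s(a, v) else 0) = G.deg S a := by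
      rw [deg, Finset.sum_filter]
      exact Finset.sum_congr rfl fun u _ => by rw [Sym2.eq_swap]
    have hw : G.wS (insert a S) = G.wS S + G.deg S a := by
      rw [G.wS_eq_wS_erase_add_deg (Finset.mem_insert_self a S), Finset.erase_insert ha,
        G.deg_insert ha, if_neg (G.not_mem_diag a), add_zero]
    rw [Finset.sum_insert ha, Finset.sum_congr rfl fun v _ => G.deg_insert ha v,
      Finset.sum_add_distrib, ih, hdeg, G.deg_insert ha, if_neg (G.not_mem_diag a), hw]
    ring

lemma deg_le_two_mul_wS_div_card {S : Finset V} {v : V} (hv : v ∈ S)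
    (hmin : ∀ u ∈ S, G.deg S v ≤ G.deg S u) : G.deg S v ≤ 2 * G.wS S / S.card := by
  rw [le_div_iff₀ (by exact_mod_cast Finset.card_pos.mpr ⟨v, hv⟩), ← sum_deg_eq_two_mul_wS,
    mul_comm, ← nsmul_eq_mul]
  exact Finset.card_nsmul_le_sum _ _ _ hmin

lemma mul_sub_le_deg_of_isOptimal {f : ℕ → ℝ} (hf0 : f 0 = 0)
    (hfpos : ∀ x, 1 ≤ x → 0 < f x) {S : Finset V}
    (hopt : ∀ T : Finset V, T.Nonempty → G.wS T / f T.card ≤ G.wS S / f S.card)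
    {v : V} (hv : v ∈ S) :
    (f S.card - f (S.card - 1)) * (G.wS S / f S.card) ≤ G.deg S v := by
  set θ := G.wS S / f S.card
  have hS : G.wS S = θ * f S.card :=
    (div_mul_cancel₀ _ (hfpos _ (Finset.card_pos.mpr ⟨v, hv⟩)).ne').symm
  have herase : G.wS (S.erase v) ≤ θ * f (S.card - 1) := by
    rcases (S.erase v).eq_empty_or_nonempty with h | h
    · have hk : S.card - 1 = 0 := by rw [← Finset.card_erase_of_mem hv, h, Finset.card_empty]
      simp [h, hk, hf0, wS]
    · have := hopt _ h
      rwa [Finset.card_erase_of_mem hv, div_le_iff₀ (hfpos _ (Finset.card_pos.mpr h |>.trans_eq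
        (Finset.card_erase_of_mem hv)))] at this
  linarith [G.wS_eq_wS_erase_add_deg hv]

def IsGreedyPeeling (n : ℕ) (Ss : ℕ → Finset V) : Prop :=
  ∀ i, 2 ≤ i → i ≤ n → ∃ v ∈ Ss i,
    (∀ u ∈ Ss i, G.deg (Ss i) v ≤ G.deg (Ss i) u) ∧ Ss (i - 1) = (Ss i).erase v

variable {G} {n : ℕ} {Ss : ℕ → Finset V}

lemma IsGreedyPeeling.card_eq (hP : G.IsGreedyPeeling n Ss) (hSn : Ss n = Finset.univ)
    (hn : n = Fintype.card V) {i : ℕ} (hi : 1 ≤ i) (hin : i ≤ n) : (Ss i).card = i := by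
  refine Nat.decreasingInduction (motive := fun k _ => 1 ≤ k → (Ss k).card = k)
    (fun k hk ih hk1 => ?_) (fun _ => by rw [hSn, Finset.card_univ, hn]) hin hi
  obtain ⟨v, hv, -, herase⟩ := hP (k + 1) (by omega) hk
  rw [Nat.add_sub_cancel] at herase
  rw [herase, Finset.card_erase_of_mem hv, ih (by omega), Nat.add_sub_cancel]

lemma IsGreedyPeeling.exists_subset_with_minDeg_mem (hP : G.IsGreedyPeeling n Ss)
    (h1 : (Ss 1).card ≤ 1) {S : Finset V} (hS : S.Nonempty) {i : ℕ} (hi : 1 ≤ i) (hin : i ≤ n)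
    (hSi : S ⊆ Ss i) :
    ∃ j ∈ Finset.Icc 1 n, S ⊆ Ss j ∧ ∃ v ∈ S, ∀ u ∈ Ss j, G.deg (Ss j) v ≤ G.deg (Ss j) u := by
  induction i with
  | zero => omega
  | succ i ih =>
    rcases Nat.eq_zero_or_pos i with rfl | hi0
    · obtain ⟨v, hv⟩ := hS
      refine ⟨1, Finset.mem_Icc.mpr ⟨le_rfl, hin⟩, hSi, v, hv, fun u hu => ?_⟩
      rw [Finset.card_le_one.mp h1 u hu v (hSi hv)]
    · obtain ⟨v, hv, hmin, herase⟩ := hP (i + 1) (by omega) hin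
      by_cases hvS : v ∈ S
      · exact ⟨i + 1, Finset.mem_Icc.mpr ⟨hi, hin⟩, hSi, v, hvS, hmin⟩
      · rw [Nat.add_sub_cancel] at herase
        exact ih hi0 (by omega) (herase ▸ fun x hx =>
          Finset.mem_erase.mpr ⟨ne_of_mem_of_not_mem hx hvS, hSi hx⟩)

end WGraph

lemma le_mul_succ_sub_of_monotone_sub {f : ℕ → ℝ} (hf0 : f 0 = 0)
    (hg : Monotone fun x => f (x + 1) - f x) (m : ℕ) : f m ≤ m * (f (m + 1) - f m) := by
  induction m with
  | zero => simp [hf0]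
  | succ m ih =>
    calc f (m + 1) = f m + (f (m + 1) - f m) := by ring
      _ ≤ (m + 1) * (f (m + 1) - f m) := by linarith
      _ ≤ (m + 1) * (f (m + 1 + 1) - f (m + 1)) :=
          mul_le_mul_of_nonneg_left (hg m.le_succ) (by positivity)
      _ = ((m + 1 : ℕ) : ℝ) * (f (m + 1 + 1) - f (m + 1)) := by push_cast; ring

lemma div_le_div_of_monotone_sub {f : ℕ → ℝ} (hf0 : f 0 = 0)
    (hg : Monotone fun x => f (x + 1) - f x) {j n : ℕ} (hj : 1 ≤ j) (hjn : j ≤ n) :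
    f j / j ≤ f n / n := by
  induction n, hjn using Nat.le_induction with
  | base => exact le_rfl
  | succ n hjn ih =>
    refine ih.trans ?_
    have hn : (0 : ℝ) < n := by exact_mod_cast hj.trans hjn
    rw [div_le_div_iff₀ hn (by positivity)]
    have := le_mul_succ_sub_of_monotone_sub hf0 hg n
    push_cast
    linarith

theorem stmt6_general (G : WGraph V)
    (n : ℕ) (hn : n = Fintype.card V) (hn1 : 1 ≤ n)
    (f : ℕ → ℝ) (hf0 : f 0 = 0) (hfpos : ∀ x, 1 ≤ x → 0 < f x)
    (hconv : ∀ x : ℕ, 0 ≤ f x - 2 * f (x + 1) + f (x + 2))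
    (Sstar : Finset V) (hne : Sstar.Nonempty)
    (hopt : ∀ S : Finset V, S.Nonempty → G.wS S / f S.card ≤ G.wS Sstar / f Sstar.card)
    (Ss : ℕ → Finset V) (hSn : Ss n = Finset.univ)
    (hpeel : ∀ i, 2 ≤ i → i ≤ n → ∃ v ∈ Ss i,
      (∀ u ∈ Ss i, G.deg (Ss i) v ≤ G.deg (Ss i) u) ∧ Ss (i - 1) = (Ss i).erase v) :
    (f Sstar.card - f (Sstar.card - 1)) * (G.wS Sstar / f Sstar.card) ≤
      (2 * f n / (n : ℝ)) *
        ((Finset.Icc 1 n).sup' (Finset.nonempty_Icc.mpr hn1) fun i => G.wS (Ss i) / f i) := by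
  set M := (Finset.Icc 1 n).sup' (Finset.nonempty_Icc.mpr hn1) fun i => G.wS (Ss i) / f i
  have hP : G.IsGreedyPeeling n Ss := hpeel
  have hcard {i : ℕ} (hi : 1 ≤ i) (hin : i ≤ n) : (Ss i).card = i := hP.card_eq hSn hn hi hin
  obtain ⟨j, hj, hSj, v, hv, hmin⟩ := hP.exists_subset_with_minDeg_mem (hcard le_rfl hn1).le hne
    hn1 le_rfl (hSn ▸ Finset.subset_univ Sstar)
  obtain ⟨hj1, hjn⟩ := Finset.mem_Icc.mp hj
  have hincr : Monotone fun x => f (x + 1) - f x :=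
    monotone_nat_of_le_succ fun x => by linarith [hconv x]
  calc (f Sstar.card - f (Sstar.card - 1)) * (G.wS Sstar / f Sstar.card)
      ≤ G.deg Sstar v := G.mul_sub_le_deg_of_isOptimal hf0 hfpos hopt hv
    _ ≤ G.deg (Ss j) v := G.deg_mono hSj v
    _ ≤ 2 * G.wS (Ss j) / j := by
        simpa only [hcard hj1 hjn] using G.deg_le_two_mul_wS_div_card (hSj hv) hmin
    _ = 2 * (G.wS (Ss j) / f j) * (f j / j) := by field_simp [(hfpos j hj1).ne']
    _ ≤ 2 * M * (f n / n) := by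
        have hdensity : G.wS (Ss j) / f j ≤ M := Finset.le_sup' (fun i => G.wS (Ss i) / f i) hj
        have hdensity_nonneg := div_nonneg (G.wS_nonneg (Ss j)) (hfpos j hj1).le
        exact mul_le_mul (by linarith) (div_le_div_of_monotone_sub hf0 hincr hj1 hjn)
          (div_nonneg (hfpos j hj1).le j.cast_nonneg) (by linarith)
    _ = _ := by ring

theorem stmt6 (G : WGraph V) (hE : G.E.Nonempty)
    (n : ℕ) (hn : n = Fintype.card V) (hn1 : 1 ≤ n)
    (f : ℕ → ℝ) (hmono : Monotone f) (hf0 : f 0 = 0) (hfpos : ∀ x, 1 ≤ x → 0 < f x)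
    (hconv : ∀ x : ℕ, 0 ≤ f x - 2 * f (x + 1) + f (x + 2))
    (Sstar : Finset V) (hne : Sstar.Nonempty)
    (hopt : ∀ S : Finset V, S.Nonempty → G.wS S / f S.card ≤ G.wS Sstar / f Sstar.card)
    (Ss : ℕ → Finset V) (hSn : Ss n = Finset.univ)
    (hpeel : ∀ i, 2 ≤ i → i ≤ n → ∃ v ∈ Ss i,
      (∀ u ∈ Ss i, G.deg (Ss i) v ≤ G.deg (Ss i) u) ∧ Ss (i - 1) = (Ss i).erase v) :
    (f Sstar.card - f (Sstar.card - 1)) * (G.wS Sstar / f Sstar.card) ≤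
      (2 * f n / (n : ℝ)) *
        ((Finset.Icc 1 n).sup' (Finset.nonempty_Icc.mpr hn1) fun i => G.wS (Ss i) / f i) :=
  stmt6_general G n hn hn1 f hf0 hfpos hconv Sstar hne hopt Ss hSn hpeel
end
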